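/- Let $n = 2(2k-1) \in 4\mathbb{Z}+2$ and consider the $n$-fold cover of $\mathrm{Sp}_{2r}$ with $Q(\alpha_r^\vee) = 1$ as above, so $Y_{Q,n} = (n/2)\mathbb{Z}^r$ and $Y_{Q,n}^{sc}$ is spanned by $(n/2)\alpha_i^\vee$ ($i<r$) and $n\alpha_r^\vee$. Then $w_{\alpha_r}[k\alpha_r^\vee] - k\alpha_r^\vee = (1-2k)\alpha_r^\vee$, and this element lies in $Y_{Q,n}$ but not in $Y_{Q,n}^{sc}$; consequently the cover is not persistent. -/

import Mathlib

open scoped BigOperators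

/-- Standard basis vector of `ℚ^r`. -/
def stdE (r : ℕ) (i : Fin r) : Fin r → ℚ := fun k => if k = i then 1 else 0

/-- Simple coroots of type `C_r` in `ℚ^r`: `α_i^∨ = e_i - e_{i+1}` (`i < r`),
`α_r^∨ = e_r`. -/
def simpleCorootC (r : ℕ) (i : Fin r) : Fin r → ℚ :=
  if h : (i : ℕ) + 1 < r then stdE r i - stdE r ⟨(i : ℕ) + 1, h⟩ else stdE r i

/-- A signed permutation `(σ, ε)` acting on `ℚ^r` (the Weyl group of type `C_r`). -/
def signedPerm (r : ℕ) (σ : Equiv.Perm (Fin r)) (ε : Fin r → Bool)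
    (y : Fin r → ℚ) : Fin r → ℚ :=
  fun i => (if ε i then (-1 : ℚ) else 1) * y (σ.symm i)

/-- `ρ^∨`, the half-sum of the positive coroots of `C_r`. -/
def rhoCheckC (r : ℕ) : Fin r → ℚ := fun i => (r : ℚ) - (i : ℕ) - 1/2

/-- The twisted Weyl action `w[y] = w(y - ρ^∨) + ρ^∨`. -/
def twistedC (r : ℕ) (σ : Equiv.Perm (Fin r)) (ε : Fin r → Bool)
    (y : Fin r → ℚ) : Fin r → ℚ :=
  signedPerm r σ ε (y - rhoCheckC r) + rhoCheckC r

/-- `Y_{Q,n} = (n/2)ℤ^r`; here the parameter is `m' = n/2`. -/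
def YQnC (r m' : ℕ) : Set (Fin r → ℚ) := {v | ∀ i, ∃ c : ℤ, v i = (m' : ℚ) * c}

/-- `Y_{Q,n}^{sc}`, spanned by `(n/2)·α_i^∨` for `i < r` and `n·α_r^∨`;
here the parameter is `m' = n/2`. -/
def YQnscC (r m' : ℕ) : AddSubgroup (Fin r → ℚ) :=
  AddSubgroup.closure
    {v | ∃ i : Fin r,
      v = (if (i : ℕ) + 1 < r then (m' : ℚ) else 2 * m') • simpleCorootC r i}

/-!
Since `ρ^∨` has last coordinate `1/2`, `w_{α_r}[kα_r^∨] - kα_r^∨ = 2(1/2 - k) e_r = -m' e_r`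
with `m' = 2k - 1 = n/2`, so it lies in `Y_{Q,n} = m'ℤ^r`. Every generator of `Y_{Q,n}^{sc}` has
coordinate sum `0` or `2m'`, so coordinate sums on `Y_{Q,n}^{sc}` are even multiples of `m'`,
whereas `(1 - 2k) e_r` has coordinate sum `-m'`. The integral point `y = kα_r^∨` thus has
different stabilizers of `w_{α_r}` modulo the two lattices.
-/

theorem twistedC_one_sub_self (r : ℕ) (ε : Fin r → Bool) (y : Fin r → ℚ) :
    twistedC r 1 ε y - y = fun j => if ε j then 2 * (rhoCheckC r j - y j) else 0 := by
  funext j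
  simp only [twistedC, signedPerm, Pi.sub_apply, Pi.add_apply, Equiv.Perm.one_def,
    Equiv.refl_symm, Equiv.refl_apply]
  split_ifs <;> ring

theorem twistedC_signFlip_smul_stdE_sub_self (r : ℕ) (i : Fin r) (c : ℚ) :
    twistedC r 1 (fun j => decide (j = i)) (c • stdE r i) - c • stdE r i
      = (2 * (rhoCheckC r i - c)) • stdE r i := by
  rw [twistedC_one_sub_self]
  funext j
  by_cases h : j = i <;> simp [stdE, h]

theorem rhoCheckC_of_add_one_eq {r : ℕ} (i : Fin r) (hi : (i : ℕ) + 1 = r) :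
    rhoCheckC r i = 1 / 2 := by
  simp only [rhoCheckC, ← hi]
  push_cast
  ring

theorem self_notMem_zmultiples_two_mul {K : Type*} [Field K] [CharZero K] {a : K} (ha : a ≠ 0) :
    a ∉ AddSubgroup.zmultiples (2 * a) := by
  intro hmem
  obtain ⟨c, hc⟩ := AddSubgroup.mem_zmultiples_iff.mp hmem
  rw [zsmul_eq_mul] at hc
  have h : ((2 * c : ℤ) : K) = 1 :=
    mul_right_cancel₀ ha (by push_cast; linear_combination hc)
  have : 2 * c = 1 := by exact_mod_cast h
  omega

theorem sum_stdE (r : ℕ) (i : Fin r) : ∑ j, stdE r i j = 1 := by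
  simp [stdE]

theorem sum_mem_zmultiples_of_mem_YQnscC {r m' : ℕ} {v : Fin r → ℚ} (hv : v ∈ YQnscC r m') :
    ∑ j, v j ∈ AddSubgroup.zmultiples (2 * m' : ℚ) := by
  let coordSum : (Fin r → ℚ) →+ ℚ := ∑ j, Pi.evalAddMonoidHom (fun _ => ℚ) j
  have hcoordSum (w : Fin r → ℚ) : coordSum w = ∑ j, w j := by
    simp [coordSum, AddMonoidHom.finsetSum_apply]
  suffices YQnscC r m' ≤ (AddSubgroup.zmultiples (2 * m' : ℚ)).comap coordSum by
    simpa [hcoordSum] using this hv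
  refine (AddSubgroup.closure_le _).mpr ?_
  rintro _ ⟨i, rfl⟩
  simp only [SetLike.mem_coe, AddSubgroup.mem_comap, hcoordSum, Pi.smul_apply, smul_eq_mul,
    ← Finset.mul_sum, simpleCorootC]
  split_ifs with h
  · simp [Finset.sum_sub_distrib, sum_stdE]
  · simp [sum_stdE]

theorem neg_smul_stdE_notMem_YQnscC {r m' : ℕ} (hm' : m' ≠ 0) (i : Fin r) :
    (-(m' : ℚ)) • stdE r i ∉ (YQnscC r m' : Set (Fin r → ℚ)) := by
  intro hmem
  have hsum := sum_mem_zmultiples_of_mem_YQnscC hmem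
  simp only [Pi.smul_apply, smul_eq_mul, ← Finset.mul_sum, sum_stdE, mul_one,
    neg_mem_iff] at hsum
  exact self_notMem_zmultiples_two_mul (by exact_mod_cast hm') hsum

theorem smul_stdE_mem_YQnC (r m' : ℕ) (c : ℤ) (i : Fin r) :
    ((m' : ℚ) * c) • stdE r i ∈ YQnC r m' := by
  intro j
  by_cases h : j = i
  · exact ⟨c, by simp [stdE, h]⟩
  · exact ⟨0, by simp [stdE, h]⟩

/-- Let `n = 2(2k-1) ∈ 4ℤ+2` and consider the `n`-fold cover of
`Sp_{2r}` with `Q(α_r^∨) = 1`, so `Y_{Q,n} = (n/2)ℤ^r` and `Y_{Q,n}^{sc}` is spanned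
by `(n/2)α_i^∨` (`i < r`) and `nα_r^∨`.  Then
`w_{α_r}[k α_r^∨] - k α_r^∨ = (1-2k) α_r^∨`, this element lies in `Y_{Q,n}` but not
in `Y_{Q,n}^{sc}`, and consequently the cover is not persistent. -/
theorem statement6 (r k : ℕ) (hr : 0 < r) (hk : 1 ≤ k) :
    (twistedC r 1 (fun i => decide ((i : ℕ) = r - 1)) ((k : ℚ) • stdE r ⟨r - 1, by omega⟩)
        - (k : ℚ) • stdE r ⟨r - 1, by omega⟩
      = ((1 : ℚ) - 2 * k) • stdE r ⟨r - 1, by omega⟩) ∧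
    (twistedC r 1 (fun i => decide ((i : ℕ) = r - 1)) ((k : ℚ) • stdE r ⟨r - 1, by omega⟩)
        - (k : ℚ) • stdE r ⟨r - 1, by omega⟩ ∈ YQnC r (2 * k - 1)) ∧
    (twistedC r 1 (fun i => decide ((i : ℕ) = r - 1)) ((k : ℚ) • stdE r ⟨r - 1, by omega⟩)
        - (k : ℚ) • stdE r ⟨r - 1, by omega⟩ ∉ (YQnscC r (2 * k - 1) : Set (Fin r → ℚ))) ∧
    ¬ (∀ y : Fin r → ℚ, (∀ i, ∃ z : ℤ, y i = (z : ℚ)) →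
        {p : Equiv.Perm (Fin r) × (Fin r → Bool) |
            twistedC r p.1 p.2 y - y ∈ (YQnscC r (2 * k - 1) : Set (Fin r → ℚ))}
          = {p : Equiv.Perm (Fin r) × (Fin r → Bool) |
              twistedC r p.1 p.2 y - y ∈ YQnC r (2 * k - 1)}) := by
  set last : Fin r := ⟨r - 1, by omega⟩
  have hm' : ((2 * k - 1 : ℕ) : ℚ) = 2 * k - 1 := by
    push_cast [Nat.cast_sub (by omega : 1 ≤ 2 * k)]
    ring
  have hflip : (fun i : Fin r => decide ((i : ℕ) = r - 1)) = fun i => decide (i = last) := by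
    funext i; simp [last, Fin.ext_iff]
  have hdiff : twistedC r 1 (fun i => decide ((i : ℕ) = r - 1)) ((k : ℚ) • stdE r last)
      - (k : ℚ) • stdE r last = ((1 : ℚ) - 2 * k) • stdE r last := by
    rw [hflip, twistedC_signFlip_smul_stdE_sub_self,
      rhoCheckC_of_add_one_eq last (by simp [last]; omega)]
    ring_nf
  have hmemYQn : ((1 : ℚ) - 2 * k) • stdE r last ∈ YQnC r (2 * k - 1) := by
    simpa [hm'] using smul_stdE_mem_YQnC r (2 * k - 1) (-1) last
  have hnotMemSc :
      ((1 : ℚ) - 2 * k) • stdE r last ∉ (YQnscC r (2 * k - 1) : Set (Fin r → ℚ)) := by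
    simpa [hm'] using neg_smul_stdE_notMem_YQnscC (by omega : 2 * k - 1 ≠ 0) last
  refine ⟨hdiff, hdiff ▸ hmemYQn, hdiff ▸ hnotMemSc, fun hpersistent => ?_⟩
  have hy : ∀ i, ∃ z : ℤ, ((k : ℚ) • stdE r last) i = (z : ℚ) := fun i => by
    simpa using smul_stdE_mem_YQnC r 1 k last i
  have hstab := Set.ext_iff.mp (hpersistent _ hy) (1, fun i => decide ((i : ℕ) = r - 1))
  simp only [Set.mem_ofPred_eq, hdiff] at hstab
  exact hnotMemSc (hstab.mpr hmemYQn)
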